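/- Any time-√n garden-hose protocol for the Equality function EQ_n(x,y) = [x = y] on n-bit inputs has size 2^{Ω(√n)}, and there is a time-O(√n) garden-hose protocol for EQ_n of size O(2^{√n} · √n). -/

import Mathlib

/-- One step of the water's path in a garden-hose game: on even steps Alice's
matching (an involution on pipes together with the tap `none`) is applied,
on odd steps Bob's matching (an involution on the pipes). A fixed point of the
relevant involution means the corresponding pipe end is open (unmatched). -/
def ghStep {s : ℕ} (A : Option (Fin s) → Option (Fin s)) (B : Fin s → Fin s)
    (n : ℕ) (v : Option (Fin s)) : Option (Fin s) :=
  if n % 2 = 0 then A v else Option.map B v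

/-- Position of the water after `n` steps, starting at the tap `none`. -/
def ghWalk {s : ℕ} (A : Option (Fin s) → Option (Fin s)) (B : Fin s → Fin s) :
    ℕ → Option (Fin s)
  | 0 => none
  | n + 1 => ghStep A B n (ghWalk A B n)

/-- The length of the path starting at the tap: the first time the walk halts
(i.e. the current pipe end is open). Its parity is the output of the game. -/
noncomputable def ghLen {s : ℕ} (A : Option (Fin s) → Option (Fin s))
    (B : Fin s → Fin s) : ℕ :=
  sInf {n | ghStep A B n (ghWalk A B n) = ghWalk A B n}

/-- A garden-hose protocol with `s` pipes: Alice places, depending on her input,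
a matching (involution) on the pipes together with the tap `none`; Bob places a
matching on the pipes. -/
structure GHProtocol (X Y : Type) (s : ℕ) where
  A : X → Option (Fin s) → Option (Fin s)
  B : Y → Fin s → Fin s
  hA : ∀ x, Function.Involutive (A x)
  hB : ∀ y, Function.Involutive (B y)

/-- The protocol computes `f` if for every input the walk from the tap halts and
the parity of the path length is `f x y`. -/
def GHProtocol.Computes {X Y : Type} {s : ℕ} (P : GHProtocol X Y s)
    (f : X → Y → Bool) : Prop :=
  ∀ x y,
    {n | ghStep (P.A x) (P.B y) n (ghWalk (P.A x) (P.B y) n)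
        = ghWalk (P.A x) (P.B y) n}.Nonempty ∧
    (ghLen (P.A x) (P.B y) % 2 = 1 ↔ f x y = true)

/-- The garden-hose complexity of `f`. -/
noncomputable def GH {X Y : Type} (f : X → Y → Bool) : ℕ :=
  sInf {s | ∃ P : GHProtocol X Y s, P.Computes f}

/-- The Equality function on `n`-bit inputs. -/
def EQ (n : ℕ) (x y : Fin n → Bool) : Bool := decide (x = y)

/-!
Lower bound: on the diagonal, the path of a protocol with time `T` determines the input. Indeed,
if `(x, x)` and `(x', x')` produce the same path, then so does the mixed input `(x, x')`, since
each player only ever acts on pipe ends of the path; it therefore halts after the same odd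
number of steps, and `x = x'`. Hence `2 ^ n ≤ (s + 1) ^ (T + 2)`, which for `T = √n` forces
`s + 1 ≥ 2 ^ (√n / 2)`.

Upper bound: cut the inputs into `k = √n + 2` blocks of `√n` bits. The water visits the blocks
in order: Bob sends it into the pipe labelled by his block, and Alice lets it continue to the
next block only out of the pipe labelled by hers. A first mismatch in block `j` stops it after
`2 j + 2` steps; if all blocks agree it leaves through an open pipe after `2 k + 1` steps. This
uses `k · 2 ^ √n + k + 1` pipes.
-/

namespace GardenHose

variable {γ δ : Type*}

def walk (A : Option γ → Option γ) (B : γ → γ) : ℕ → Option γ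
  | 0 => none
  | n + 1 => if n % 2 = 0 then A (walk A B n) else (walk A B n).map B

def haltTimes (A : Option γ → Option γ) (B : γ → γ) : Set ℕ :=
  {n | walk A B (n + 1) = walk A B n}

section Walk

variable {A A' : Option γ → Option γ} {B B' : γ → γ} {n : ℕ}

@[simp] lemma walk_zero : walk A B 0 = none := rfl

lemma walk_succ_of_even (h : n % 2 = 0) : walk A B (n + 1) = A (walk A B n) := if_pos h

lemma walk_succ_of_odd (h : n % 2 = 1) : walk A B (n + 1) = (walk A B n).map B :=
  if_neg (by omega)

lemma walk_mix_eq {m : ℕ} (h : ∀ n ≤ m, walk A B n = walk A' B' n) :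
    ∀ n ≤ m, walk A B' n = walk A B n := by
  intro n hn
  induction n with
  | zero => rfl
  | succ n ih =>
    rcases Nat.mod_two_eq_zero_or_one n with hpar | hpar
    · rw [walk_succ_of_even hpar, walk_succ_of_even hpar, ih (by omega)]
    · rw [walk_succ_of_odd hpar, ih (by omega), h n (by omega), ← walk_succ_of_odd hpar,
        h (n + 1) hn]

lemma isLeast_haltTimes_of_walk_eq {L : ℕ} (hL : IsLeast (haltTimes A B) L)
    (h : ∀ n ≤ L + 1, walk A' B' n = walk A B n) : IsLeast (haltTimes A' B') L := by
  have hmem : ∀ n ≤ L, n ∈ haltTimes A' B' ↔ n ∈ haltTimes A B := fun n hn => by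
    simp only [haltTimes, Set.mem_ofPred_eq, h n (by omega), h (n + 1) (by omega)]
  exact ⟨(hmem L le_rfl).2 hL.1, fun n hn => by
    by_contra! hlt
    exact absurd (hL.2 ((hmem n hlt.le).1 hn)) (not_le.2 hlt)⟩

lemma walk_conj (e : γ ≃ δ) (n : ℕ) :
    walk (e.optionCongr.conj A) (e.conj B) n = (walk A B n).map e := by
  induction n with
  | zero => rfl
  | succ n ih =>
    rcases Nat.mod_two_eq_zero_or_one n with hpar | hpar
    · rw [walk_succ_of_even hpar, walk_succ_of_even hpar, ih, Equiv.conj_apply,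
        ← Equiv.optionCongr_apply, Equiv.symm_apply_apply, Equiv.optionCongr_apply]
    · rw [walk_succ_of_odd hpar, walk_succ_of_odd hpar, ih]
      cases walk A B n <;> simp [Equiv.conj_apply]

lemma haltTimes_conj (e : γ ≃ δ) :
    haltTimes (e.optionCongr.conj A) (e.conj B) = haltTimes A B := by
  ext n
  simp only [haltTimes, Set.mem_ofPred_eq, walk_conj]
  exact (Option.map_injective e.injective).eq_iff

end Walk

section ghWalk

variable {s : ℕ} (A : Option (Fin s) → Option (Fin s)) (B : Fin s → Fin s)

lemma ghWalk_eq_walk : ghWalk A B = walk A B := by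
  funext n
  induction n with
  | zero => rfl
  | succ n ih => simp only [ghWalk, ghStep, walk, ih]

lemma setOf_ghStep_eq_haltTimes :
    {n | ghStep A B n (ghWalk A B n) = ghWalk A B n} = haltTimes A B := by
  change {n | ghWalk A B (n + 1) = ghWalk A B n} = _
  rw [ghWalk_eq_walk]
  rfl

lemma ghLen_eq_sInf_haltTimes : ghLen A B = sInf (haltTimes A B) := by
  rw [ghLen, setOf_ghStep_eq_haltTimes]

end ghWalk

end GardenHose

open GardenHose

lemma Nat.two_pow_div_two_le_of_two_pow_mul_self_le {T m : ℕ} (h : 2 ^ (T * T) ≤ m ^ (T + 2)) :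
    2 ^ (T / 2) ≤ m := by
  have hm : 1 ≤ m := by
    rcases Nat.eq_zero_or_pos m with rfl | hm
    · simp at h
    · exact hm
  rcases Nat.lt_or_ge T 2 with hT | hT
  · simpa [Nat.div_eq_of_lt hT] using hm
  · refine (Nat.pow_le_pow_iff_left (n := 2 * T) (by omega)).1 ?_
    calc (2 ^ (T / 2)) ^ (2 * T) = 2 ^ (T / 2 * 2 * T) := by rw [← pow_mul, mul_assoc]
      _ ≤ 2 ^ (T * T) := Nat.pow_le_pow_right two_pos (by gcongr; exact Nat.div_mul_le_self T 2)
      _ ≤ m ^ (T + 2) := h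
      _ ≤ m ^ (2 * T) := Nat.pow_le_pow_right hm (by omega)

namespace GHProtocol

variable {X : Type} [DecidableEq X] {s T : ℕ}

lemma diagonal_walk_injective (P : GHProtocol X X s) (hP : P.Computes fun x y => decide (x = y))
    (hT : ∀ x, ghLen (P.A x) (P.B x) ≤ T) :
    Function.Injective fun x (i : Fin (T + 2)) => ghWalk (P.A x) (P.B x) i := by
  intro x x' hxx'
  have hwalk : ∀ n ≤ T + 1, walk (P.A x) (P.B x) n = walk (P.A x') (P.B x') n := fun n hn => by
    simpa [ghWalk_eq_walk] using congrFun hxx' ⟨n, by omega⟩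
  have hL : IsLeast (haltTimes (P.A x) (P.B x)) (ghLen (P.A x) (P.B x)) := by
    rw [ghLen_eq_sInf_haltTimes]
    exact isLeast_csInf (setOf_ghStep_eq_haltTimes _ _ ▸ (hP x x).1)
  have hlen : ghLen (P.A x) (P.B x') = ghLen (P.A x) (P.B x) := by
    rw [ghLen_eq_sInf_haltTimes]
    refine (isLeast_haltTimes_of_walk_eq hL fun n hn => ?_).csInf_eq
    exact walk_mix_eq hwalk n (by linarith [hT x])
  have hodd : ghLen (P.A x) (P.B x) % 2 = 1 := (hP x x).2.2 (decide_eq_true rfl)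
  simpa using (hP x x').2.1 (hlen ▸ hodd)

lemma card_le_of_computes_eq [Fintype X] (P : GHProtocol X X s)
    (hP : P.Computes fun x y => decide (x = y)) (hT : ∀ x, ghLen (P.A x) (P.B x) ≤ T) :
    Fintype.card X ≤ (s + 1) ^ (T + 2) := by
  simpa using Fintype.card_le_of_injective _ (diagonal_walk_injective P hP hT)

lemma two_pow_sqrt_div_two_le {n : ℕ} (P : GHProtocol (Fin n → Bool) (Fin n → Bool) s)
    (hP : P.Computes (EQ n)) (hT : ∀ x y, ghLen (P.A x) (P.B y) ≤ Nat.sqrt n) :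
    2 ^ (Nat.sqrt n / 2) ≤ s + 1 := by
  refine Nat.two_pow_div_two_le_of_two_pow_mul_self_le ?_
  calc 2 ^ (Nat.sqrt n * Nat.sqrt n) ≤ 2 ^ n := Nat.pow_le_pow_right two_pos (Nat.sqrt_le n)
    _ = Fintype.card (Fin n → Bool) := by simp
    _ ≤ (s + 1) ^ (Nat.sqrt n + 2) := card_le_of_computes_eq P hP fun x => hT x x

end GHProtocol

lemma Function.Involutive.equiv_conj {α β : Type*} {f : α → α} (hf : Function.Involutive f)
    (e : α ≃ β) : Function.Involutive (e.conj f) := fun b => by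
  simp only [Equiv.conj_apply, Equiv.symm_apply_apply, hf _, Equiv.apply_symm_apply]

namespace GHProtocol

lemma exists_of_isLeast_haltTimes {X Y γ : Type} [Fintype γ] (A : X → Option γ → Option γ)
    (B : Y → γ → γ) (hA : ∀ x, Function.Involutive (A x)) (hB : ∀ y, Function.Involutive (B y))
    {f : X → Y → Bool} {t : ℕ}
    (hL : ∀ x y, ∃ L, IsLeast (haltTimes (A x) (B y)) L ∧ (L % 2 = 1 ↔ f x y = true) ∧ L ≤ t) :
    ∃ P : GHProtocol X Y (Fintype.card γ), P.Computes f ∧ ∀ x y, ghLen (P.A x) (P.B y) ≤ t := by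
  let e := Fintype.equivFin γ
  let P : GHProtocol X Y (Fintype.card γ) :=
    { A := fun x => e.optionCongr.conj (A x)
      B := fun y => e.conj (B y)
      hA := fun x => (hA x).equiv_conj _
      hB := fun y => (hB y).equiv_conj _ }
  have hlen : ∀ x y, ∃ L, IsLeast (haltTimes (A x) (B y)) L ∧ ghLen (P.A x) (P.B y) = L ∧
      (L % 2 = 1 ↔ f x y = true) ∧ L ≤ t := fun x y => by
    obtain ⟨L, hL, hf, ht⟩ := hL x y
    refine ⟨L, hL, ?_, hf, ht⟩
    rw [ghLen_eq_sInf_haltTimes, haltTimes_conj, hL.csInf_eq]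
  refine ⟨P, fun x y => ?_, fun x y => ?_⟩
  · obtain ⟨L, hL, hPL, hf, -⟩ := hlen x y
    refine ⟨?_, hPL ▸ hf⟩
    rw [setOf_ghStep_eq_haltTimes, haltTimes_conj]
    exact ⟨L, hL.1⟩
  · obtain ⟨L, -, hPL, -, ht⟩ := hlen x y
    exact hPL ▸ ht

end GHProtocol

namespace TupleEq

variable {k : ℕ} {V : Type*} [DecidableEq V]

abbrev Pipe (k : ℕ) (V : Type*) := (Fin k × V) ⊕ Fin (k + 1)

/-- The water reaches block `j` through pipe `inr j`; Bob sends it on to `inl (j, y j)`, which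
Alice connects to `inr (j + 1)` if `x j = y j` and leaves open otherwise. The pipe `inr k` is
open on Bob's side. -/
def alice (x : Fin k → V) : Option (Pipe k V) → Option (Pipe k V)
  | none => some (.inr 0)
  | some (.inr j) => Fin.cases none (fun i => some (.inl (i, x i))) j
  | some (.inl (i, v)) => if v = x i then some (.inr i.succ) else some (.inl (i, v))

def bob (y : Fin k → V) : Pipe k V → Pipe k V
  | .inr j => Fin.lastCases (.inr (Fin.last k)) (fun i => .inl (i, y i)) j
  | .inl (i, v) => if v = y i then .inr i.castSucc else .inl (i, v)

lemma alice_involutive (x : Fin k → V) : Function.Involutive (alice x) := by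
  rintro (_ | ⟨i, v⟩ | j)
  · rfl
  · by_cases hv : v = x i
    · subst hv; simp [alice]
    · simp [alice, hv]
  · induction j using Fin.cases <;> simp [alice]

lemma bob_involutive (y : Fin k → V) : Function.Involutive (bob y) := by
  rintro (⟨i, v⟩ | j)
  · by_cases hv : v = y i
    · subst hv; simp [bob]
    · simp [bob, hv]
  · induction j using Fin.lastCases <;> simp [bob]

variable {x y : Fin k → V}

lemma walk_two_mul_add_one (i : Fin (k + 1)) (hxy : ∀ j : Fin k, j.castSucc < i → x j = y j) :
    walk (alice x) (bob y) (2 * i + 1) = some (.inr i) := by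
  induction i using Fin.induction with
  | zero => rfl
  | succ i ih =>
    have hwalk := ih fun j hj => hxy j (hj.trans Fin.castSucc_lt_succ)
    rw [Fin.val_castSucc] at hwalk
    rw [Fin.val_succ, show 2 * (i + 1 : ℕ) + 1 = 2 * i + 1 + 1 + 1 by ring,
      walk_succ_of_even (by omega), walk_succ_of_odd (by omega), hwalk]
    simp [alice, bob, hxy i Fin.castSucc_lt_succ]

lemma walk_two_mul_add_two (i : Fin k) (hxy : ∀ j < i, x j = y j) :
    walk (alice x) (bob y) (2 * i + 2) = some (.inl (i, y i)) := by
  have hwalk := walk_two_mul_add_one (x := x) (y := y) i.castSucc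
    fun j hj => hxy j (Fin.castSucc_lt_castSucc_iff.1 hj)
  rw [Fin.val_castSucc] at hwalk
  rw [walk_succ_of_odd (by omega), hwalk]
  simp [bob]

lemma not_mem_haltTimes {n : ℕ} (hn : n < 2 * k + 1)
    (hxy : ∀ j : Fin k, 2 * (j : ℕ) + 1 < n → x j = y j) : n ∉ haltTimes (alice x) (bob y) := by
  simp only [haltTimes, Set.mem_ofPred_eq]
  obtain ⟨i, rfl | rfl⟩ := Nat.even_or_odd' n
  · rw [show 2 * i = 2 * (⟨i, by omega⟩ : Fin (k + 1)) from rfl,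
      walk_two_mul_add_one _ fun j hj => hxy j (by simp [Fin.lt_def] at hj; omega)]
    rcases i with _ | i
    · simp
    · rw [show 2 * (i + 1) = 2 * (⟨i, by omega⟩ : Fin k) + 2 from rfl,
        walk_two_mul_add_two _ fun j hj => hxy j (by simp [Fin.lt_def] at hj; omega)]
      simp
  · rw [show 2 * i + 1 + 1 = 2 * (⟨i, by omega⟩ : Fin k) + 2 from rfl,
      walk_two_mul_add_two _ fun j hj => hxy j (by simp [Fin.lt_def] at hj; omega),
      show 2 * i + 1 = 2 * (⟨i, by omega⟩ : Fin (k + 1)) + 1 from rfl,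
      walk_two_mul_add_one _ fun j hj => hxy j (by simp [Fin.lt_def] at hj; omega)]
    simp

lemma isLeast_haltTimes_self (x : Fin k → V) :
    IsLeast (haltTimes (alice x) (bob x)) (2 * k + 1) := by
  refine ⟨?_, fun n hn => not_lt.1 fun hlt => not_mem_haltTimes hlt (fun _ _ => rfl) hn⟩
  have hwalk := walk_two_mul_add_one (x := x) (y := x) (Fin.last k) fun _ _ => rfl
  rw [Fin.val_last] at hwalk
  simp [haltTimes, walk_succ_of_odd (n := 2 * k + 1) (by omega), hwalk, bob]

lemma isLeast_haltTimes_of_ne (j : Fin k) (hj : x j ≠ y j) (hmin : ∀ i < j, x i = y i) :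
    IsLeast (haltTimes (alice x) (bob y)) (2 * j + 2) := by
  refine ⟨?_, fun n hn => not_lt.1 fun hlt => not_mem_haltTimes (by omega) (fun i hi => ?_) hn⟩
  · have hwalk := walk_two_mul_add_two j hmin
    simp [haltTimes, walk_succ_of_even (n := 2 * (j : ℕ) + 2) (by omega), hwalk, alice, Ne.symm hj]
  · exact hmin i (by rw [Fin.lt_def]; omega)

lemma exists_isLeast_haltTimes (x y : Fin k → V) :
    ∃ L, IsLeast (haltTimes (alice x) (bob y)) L ∧ (L % 2 = 1 ↔ x = y) ∧ L ≤ 2 * k + 1 := by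
  by_cases hxy : x = y
  · subst hxy
    exact ⟨_, isLeast_haltTimes_self x, by simp, le_rfl⟩
  · obtain ⟨j, hj, hmin⟩ := WellFounded.has_min wellFounded_lt {j | x j ≠ y j}
      (Function.ne_iff.1 hxy)
    refine ⟨_, isLeast_haltTimes_of_ne j hj fun i hi => ?_, by simp [hxy], by omega⟩
    by_contra h
    exact hmin i h hi

end TupleEq

section Blocks

variable {n k b : ℕ} {α : Type*} [Inhabited α]

/-- Cut an `n`-bit string into `k` blocks of length `b`, padding with `default`. -/
noncomputable def toBlocks (h : n ≤ k * b) (x : Fin n → α) : Fin k → Fin b → α :=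
  Function.curry (Function.extend (finProdFinEquiv.symm ∘ Fin.castLE h) x default)

lemma toBlocks_injective (h : n ≤ k * b) : Function.Injective (toBlocks (α := α) h) := by
  intro x x' hxx'
  have hι : Function.Injective (finProdFinEquiv.symm ∘ Fin.castLE h) :=
    finProdFinEquiv.symm.injective.comp (Fin.castLE_injective h)
  funext p
  rw [← hι.extend_apply x default p, ← hι.extend_apply x' default p]
  exact congrFun (Function.curry_injective hxx') _

end Blocks

lemma GHProtocol.exists_computes_EQ (n : ℕ) :
    ∃ s ≤ 5 * (2 ^ Nat.sqrt n * (Nat.sqrt n + 1)),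
      ∃ P : GHProtocol (Fin n → Bool) (Fin n → Bool) s,
        P.Computes (EQ n) ∧ ∀ x y, ghLen (P.A x) (P.B y) ≤ 5 * (Nat.sqrt n + 1) := by
  set b := Nat.sqrt n
  have hn : n ≤ (b + 2) * b := by nlinarith [Nat.lt_succ_sqrt n]
  obtain ⟨P, hP, ht⟩ := exists_of_isLeast_haltTimes
    (fun x => TupleEq.alice (toBlocks hn x)) (fun y => TupleEq.bob (toBlocks hn y))
    (fun _ => TupleEq.alice_involutive _) (fun _ => TupleEq.bob_involutive _)
    (f := EQ n) (t := 2 * (b + 2) + 1) fun x y => by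
      obtain ⟨L, hL, hodd, hle⟩ := TupleEq.exists_isLeast_haltTimes (toBlocks hn x) (toBlocks hn y)
      exact ⟨L, hL, by simp [EQ, hodd, (toBlocks_injective hn).eq_iff], hle⟩
  refine ⟨_, ?_, P, hP, fun x y => (ht x y).trans (by omega)⟩
  have h2b : 1 ≤ 2 ^ b := Nat.one_le_two_pow
  simp only [Fintype.card_sum, Fintype.card_prod, Fintype.card_fin, Fintype.card_fun,
    Fintype.card_bool]
  nlinarith

/-- Time-bounded garden-hose complexity of Equality. Lower bound: any
garden-hose protocol for `EQ_n` whose path from the tap uses at most `√n` pipes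
on every input has size `2^{Ω(√n)}`. Upper bound: there is a garden-hose
protocol for `EQ_n` with time `O(√n)` and size `O(2^{√n} · √n)`. -/
theorem time_bounded_GH_equality :
    (∃ c : ℕ, 0 < c ∧
      ∀ (n s : ℕ) (P : GHProtocol (Fin n → Bool) (Fin n → Bool) s),
        P.Computes (EQ n) →
        (∀ x y, ghLen (P.A x) (P.B y) ≤ Nat.sqrt n) →
        2 ^ (Nat.sqrt n / c) ≤ c * (s + 1)) ∧
    (∃ C : ℕ, 0 < C ∧
      ∀ n : ℕ, ∃ s ≤ C * (2 ^ Nat.sqrt n * (Nat.sqrt n + 1)),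
        ∃ P : GHProtocol (Fin n → Bool) (Fin n → Bool) s,
          P.Computes (EQ n) ∧
          ∀ x y, ghLen (P.A x) (P.B y) ≤ C * (Nat.sqrt n + 1)) := by
  refine ⟨⟨2, two_pos, fun n s P hP hT => ?_⟩, ⟨5, by norm_num, GHProtocol.exists_computes_EQ⟩⟩
  calc 2 ^ (Nat.sqrt n / 2) ≤ s + 1 := P.two_pow_sqrt_div_two_le hP hT
    _ ≤ 2 * (s + 1) := by omega
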